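/- arXiv:0911.3024 — 4 statements merged into one kernel-verified Lean document; each statement's English description precedes it below -/
import Mathlib

section
/- In LIC there exist paths P, P1, P2 such that the family {P,P1,P2} is admissible, P has one end in T and the other end in T', P1 is a path from s1 to s1', and P2 is a path from s2 to s2'. Also, in LIC there exist paths Q, Q1, Q2 such that the family {Q,Q1,Q2} is admissible, Q has one end in T and the other end in T', Q1 is a path from s3 to s3', and Q2 is a path from s4 to s4'. -/
namespace TwoPairs

/-- The vertices of the gadget graphs `XCH` and `LIC`. -/
inductive V : Type
  | s1 | s2 | s3 | s4
  | s1' | s2' | s3' | s4'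
  | t1 | t2 | t1' | t2'
  | u1 | u2 | u3 | u4 | u5 | u6 | u7 | u8 | u9 | u10 | u11 | u12
  | a | b | c | d
  deriving DecidableEq

open V

/-- The 38 edges of `XCH` (and of `LIC`, which is the same graph). -/
def edgeList : List (V × V) :=
  [(s1,u1),(t1,u1),(u1,u2),(u1,u5),(s2,u2),(u2,u5),(u2,a),
   (s3,u3),(u3,a),(u3,u4),(u3,u6),(s4,u4),(t1',u4),(u4,u6),
   (u5,b),(u5,u7),(u6,c),(u6,u8),(a,b),(a,c),(b,d),(c,d),
   (b,u7),(c,u8),(d,u10),(d,u11),(u7,u9),(u7,u10),(u9,u10),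
   (t2,u9),(s1',u9),(s2',u10),(u8,u11),(u8,u12),(u11,u12),
   (s3',u11),(s4',u12),(t2',u12)]

/-- The underlying graph of the gadgets `XCH` and `LIC`. -/
def G : SimpleGraph V := SimpleGraph.fromRel (fun x y => (x, y) ∈ edgeList)

/-- Opposite pairs: an entry `(v, (x, y))` means that the two edges `vx` and `vy`
form an opposite pair at the degree-4 vertex `v`. -/
def oppList : List (V × V × V) :=
  [(u1,(t1,u2)),(u1,(s1,u5)),
   (u2,(u1,a)),(u2,(s2,u5)),
   (u3,(u4,a)),(u3,(s3,u6)),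
   (u4,(t1',u3)),(u4,(s4,u6)),
   (u5,(u2,u7)),(u5,(u1,b)),
   (u6,(u4,c)),(u6,(u3,u8)),
   (u7,(b,u9)),(u7,(u5,u10)),
   (u8,(u6,u11)),(u8,(c,u12)),
   (u9,(u10,t2)),(u9,(u7,s1')),
   (u10,(d,u9)),(u10,(u7,s2')),
   (u11,(u12,d)),(u11,(u8,s3')),
   (u12,(t2',u11)),(u12,(u8,s4')),
   (a,(u3,b)),(a,(u2,c)),
   (b,(a,u7)),(b,(u5,d)),
   (c,(a,u8)),(c,(u6,d)),
   (d,(b,u11)),(d,(c,u10))]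

/-- The edges from `v` to `x` and from `v` to `y` form an opposite pair at `v`. -/
def IsOpp (v x y : V) : Prop := (v,(x,y)) ∈ oppList ∨ (v,(y,x)) ∈ oppList

/-- Two edge-disjoint trails `P` and `Q` cross at `v` if `P` contains both edges of one
opposite pair at `v` and `Q` contains both edges of the other opposite pair at `v`. -/
def CrossAt {a1 a2 b1 b2 : V} (P : G.Walk a1 a2) (Q : G.Walk b1 b2) (v : V) : Prop :=
  ∃ x y x' y', IsOpp v x y ∧ IsOpp v x' y' ∧ s(x, y) ≠ s(x', y') ∧
    s(v, x) ∈ P.edges ∧ s(v, y) ∈ P.edges ∧ s(v, x') ∈ Q.edges ∧ s(v, y') ∈ Q.edges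

/-- Two paths are edge-disjoint if no edge lies on both. -/
def EdgeDisjoint {a1 a2 b1 b2 : V} (P : G.Walk a1 a2) (Q : G.Walk b1 b2) : Prop :=
  ∀ e, e ∈ P.edges → e ∉ Q.edges

/-- The crossing vertices of `XCH`. -/
def xchCross : Set V := {a, b, c, d}

/-- The crossing vertices of `LIC`. -/
def licCross : Set V := {a, b, c, d, u5, u6}

/-- Two members of a family of paths are admissible (w.r.t. the set `cs` of crossing
vertices) if they are edge-disjoint and do not cross at any non-crossing vertex. -/
def GoodPair (cs : Set V) {a1 a2 b1 b2 : V} (P : G.Walk a1 a2) (Q : G.Walk b1 b2) : Prop :=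
  EdgeDisjoint P Q ∧ ∀ v ∉ cs, ¬ CrossAt P Q v

def Sset : Set V := {s1, s2, s3, s4}
def S'set : Set V := {s1', s2', s3', s4'}
def Tset : Set V := {t1, t2}
def T'set : Set V := {t1', t2'}

end TwoPairs

namespace TwoPairs
open V

/-!
The six routes below are explicit paths. The only crossings at degree-4 vertices outside
`{a, b, c, d}` are those of `P` and `P1` at `u5` and of `Q` and `Q2` at `u6`, which `LIC`
declares crossing vertices.
-/

instance : Fintype V :=
  ⟨⟨↑([s1, s2, s3, s4, s1', s2', s3', s4', t1, t2, t1', t2', u1, u2, u3, u4, u5, u6, u7, u8,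
      u9, u10, u11, u12, a, b, c, d] : List V), by decide⟩, fun x => by cases x <;> decide⟩

instance : DecidableRel G.Adj := fun x y =>
  decidable_of_iff (x ≠ y ∧ ((x, y) ∈ edgeList ∨ (y, x) ∈ edgeList))
    (by rw [G, SimpleGraph.fromRel_adj])

instance : DecidablePred (· ∈ licCross) := fun v =>
  decidable_of_iff (v ∈ [a, b, c, d, u5, u6]) (by simp [licCross])

section Crossing

variable {a1 a2 b1 b2 : V} (P : G.Walk a1 a2) (Q : G.Walk b1 b2)

instance : Decidable (EdgeDisjoint P Q) :=
  inferInstanceAs (Decidable (∀ e ∈ P.edges, e ∉ Q.edges))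

-- Quantifying over `oppList` instead of over `V⁴` keeps the decision procedure small.
theorem crossAt_iff_exists_oppList (v : V) :
    CrossAt P Q v ↔ ∃ p ∈ oppList, ∃ q ∈ oppList, p.1 = v ∧ q.1 = v ∧
      s(p.2.1, p.2.2) ≠ s(q.2.1, q.2.2) ∧ s(v, p.2.1) ∈ P.edges ∧ s(v, p.2.2) ∈ P.edges ∧
      s(v, q.2.1) ∈ Q.edges ∧ s(v, q.2.2) ∈ Q.edges := by
  constructor
  · rintro ⟨x, y, x', y', hP | hP, hQ | hQ, hne, hx, hy, hx', hy'⟩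
    · exact ⟨_, hP, _, hQ, rfl, rfl, hne, hx, hy, hx', hy'⟩
    · exact ⟨_, hP, _, hQ, rfl, rfl, by rwa [Sym2.eq_swap (a := y')], hx, hy, hy', hx'⟩
    · exact ⟨_, hP, _, hQ, rfl, rfl, by rwa [Sym2.eq_swap (a := y)], hy, hx, hx', hy'⟩
    · exact ⟨_, hP, _, hQ, rfl, rfl, by rwa [Sym2.eq_swap (a := y), Sym2.eq_swap (a := y')],
        hy, hx, hy', hx'⟩
  · rintro ⟨⟨_, x, y⟩, hp, ⟨_, x', y'⟩, hq, rfl, rfl, hne, hx, hy, hx', hy'⟩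
    exact ⟨x, y, x', y', .inl hp, .inl hq, hne, hx, hy, hx', hy'⟩

instance (v : V) : Decidable (CrossAt P Q v) :=
  decidable_of_iff' _ (crossAt_iff_exists_oppList P Q v)

instance : Decidable (GoodPair licCross P Q) :=
  inferInstanceAs (Decidable (EdgeDisjoint P Q ∧ ∀ v, v ∉ licCross → ¬ CrossAt P Q v))

end Crossing

theorem isPath_ofSupport_iff {W : Type*} {H : SimpleGraph W} {l : List W} (hne : l ≠ [])
    (hchain : l.IsChain H.Adj) : (SimpleGraph.Walk.ofSupport l hne hchain).IsPath ↔ l.Nodup := by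
  rw [SimpleGraph.Walk.isPath_def, SimpleGraph.Walk.support_ofSupport]

def pathP : G.Walk t1 t2' :=
  .ofSupport [t1, u1, u5, b, d, u11, u12, t2'] (List.cons_ne_nil _ _) (by decide)
def pathP1 : G.Walk s1 s1' :=
  .ofSupport [s1, u1, u2, u5, u7, u9, s1'] (List.cons_ne_nil _ _) (by decide)
def pathP2 : G.Walk s2 s2' :=
  .ofSupport [s2, u2, a, c, d, u10, s2'] (List.cons_ne_nil _ _) (by decide)

def pathQ : G.Walk t2 t1' :=
  .ofSupport [t2, u9, u10, d, c, u6, u4, t1'] (List.cons_ne_nil _ _) (by decide)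
def pathQ1 : G.Walk s3 s3' :=
  .ofSupport [s3, u3, a, b, d, u11, s3'] (List.cons_ne_nil _ _) (by decide)
def pathQ2 : G.Walk s4 s4' :=
  .ofSupport [s4, u4, u3, u6, u8, u12, s4'] (List.cons_ne_nil _ _) (by decide)

/-- Lemma `lic-12`: in `LIC` there is an admissible family consisting of
a `(T,T')`-path, an `(s1,s1')`-path and an `(s2,s2')`-path; and also an admissible family
consisting of a `(T,T')`-path, an `(s3,s3')`-path and an `(s4,s4')`-path. -/
theorem statement4 :
    (∃ (τ : V) (_ : τ ∈ Tset) (τ' : V) (_ : τ' ∈ T'set)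
       (P : G.Walk τ τ') (P1 : G.Walk s1 s1') (P2 : G.Walk s2 s2'),
       P.IsTrail ∧ P1.IsTrail ∧ P2.IsTrail ∧
       GoodPair licCross P P1 ∧ GoodPair licCross P P2 ∧ GoodPair licCross P1 P2) ∧
    (∃ (τ : V) (_ : τ ∈ Tset) (τ' : V) (_ : τ' ∈ T'set)
       (Q : G.Walk τ τ') (Q1 : G.Walk s3 s3') (Q2 : G.Walk s4 s4'),
       Q.IsTrail ∧ Q1.IsTrail ∧ Q2.IsTrail ∧
       GoodPair licCross Q Q1 ∧ GoodPair licCross Q Q2 ∧ GoodPair licCross Q1 Q2) := by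
  refine
    ⟨⟨t1, by simp [Tset], t2', by simp [T'set], pathP, pathP1, pathP2, ?_, ?_, ?_, ?_, ?_, ?_⟩,
      ⟨t2, by simp [Tset], t1', by simp [T'set], pathQ, pathQ1, pathQ2, ?_, ?_, ?_, ?_, ?_, ?_⟩⟩
  all_goals first
    | exact ((isPath_ofSupport_iff _ _).2 (by decide)).isTrail
    | decide +kernel

end TwoPairs
end

section
/- In the digraph IF, if P is a directed path from a to a_i for some i in {1,2}, Q is a directed path from b to b_j for some j in {1,2}, and P and Q are arc-disjoint, then i = j. -/
namespace TwoPairs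

/-- Directed walks in a digraph given by its adjacency relation `A`. -/
inductive DWalk {V : Type*} (A : V → V → Prop) : V → V → Type _
  | nil (v : V) : DWalk A v v
  | cons {u v w : V} : A u v → DWalk A v w → DWalk A u w

variable {V : Type*} {A : V → V → Prop}

/-- The list of arcs of a directed walk. -/
def DWalk.arcs : {u v : V} → DWalk A u v → List (V × V)
  | _, _, .nil _ => []
  | u, _, .cons (v := m) _ q => (u, m) :: q.arcs

/-- A directed path is a directed walk with pairwise distinct arcs. -/
def DWalk.IsTrail {u v : V} (P : DWalk A u v) : Prop := P.arcs.Nodup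

/-- Two directed paths are arc-disjoint if they share no arc. -/
def ArcDisjoint {u v u' v' : V} (P : DWalk A u v) (Q : DWalk A u' v') : Prop :=
  ∀ e ∈ P.arcs, e ∉ Q.arcs

end TwoPairs

namespace TwoPairs

/-- The vertices of the digraph `IF`. -/
inductive VIF : Type
  | a | b | a1 | a2 | b1 | b2
  | i1 | i2 | i3 | i4 | i5 | i6 | i7 | i8 | i9 | i10
  deriving DecidableEq

open VIF

/-- The arcs of the digraph `IF`. -/
def arcsIF : List (VIF × VIF) :=
  [(a,i4),(b,i2),(i2,i1),(i2,i3),(i4,i3),(i4,i9),(i9,i8),(i3,i6),(i6,i8),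
   (i6,i5),(i1,i5),(i8,i7),(i5,i7),(i7,i10),(i8,b2),(i10,b1),(i5,a1),(i10,a2)]

/-- Adjacency relation of `IF`. -/
def AdjIF (x y : VIF) : Prop := (x, y) ∈ arcsIF

/-- `aTgt 0 = a1`, `aTgt 1 = a2`. -/
def aTgt : Fin 2 → VIF
  | 0 => a1 | 1 => a2

/-- `bTgt 0 = b1`, `bTgt 1 = b2`. -/
def bTgt : Fin 2 → VIF
  | 0 => b1 | 1 => b2


open VIF in
lemma no_walk_a1 : ∀ {u v : VIF} (_ : DWalk AdjIF u v), v = a1 →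
    u = i9 ∨ u = i8 ∨ u = i7 ∨ u = i10 ∨ u = a2 ∨ u = b1 ∨ u = b2 → False := by
  intro u v W
  induction W with
  | nil x => rintro rfl hu; simp at hu
  | cons h W ih =>
    rintro rfl (rfl|rfl|rfl|rfl|rfl|rfl|rfl) <;>
      simp [AdjIF, arcsIF] at h <;> exact ih rfl (by tauto)

open VIF in
lemma no_walk_b2 : ∀ {u v : VIF} (_ : DWalk AdjIF u v), v = b2 →
    u = i1 ∨ u = i5 ∨ u = i7 ∨ u = i10 ∨ u = a1 ∨ u = b1 ∨ u = a2 → False := by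
  intro u v W
  induction W with
  | nil x => rintro rfl hu; simp at hu
  | cons h W ih =>
    rintro rfl (rfl|rfl|rfl|rfl|rfl|rfl|rfl) <;>
      simp [AdjIF, arcsIF] at h <;> exact ih rfl (by tauto)

open VIF in
lemma walk_a1_arc : ∀ {u v : VIF} (W : DWalk AdjIF u v), v = a1 →
    u = a ∨ u = i4 ∨ u = i3 → (i3, i6) ∈ W.arcs := by
  intro u v W
  induction W with
  | nil x => rintro rfl hu; simp at hu
  | cons h W ih =>
    rintro rfl (rfl|rfl|rfl) <;> simp [AdjIF, arcsIF] at h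
    · subst h; exact List.mem_cons_of_mem _ (ih rfl (by tauto))
    · rcases h with rfl | rfl
      · exact List.mem_cons_of_mem _ (ih rfl (by tauto))
      · exact (no_walk_a1 W rfl (by tauto)).elim
    · subst h; simp [DWalk.arcs]

open VIF in
lemma walk_b2_arc : ∀ {u v : VIF} (W : DWalk AdjIF u v), v = b2 →
    u = b ∨ u = i2 ∨ u = i3 → (i3, i6) ∈ W.arcs := by
  intro u v W
  induction W with
  | nil x => rintro rfl hu; simp at hu
  | cons h W ih =>
    rintro rfl (rfl|rfl|rfl) <;> simp [AdjIF, arcsIF] at h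
    · subst h; exact List.mem_cons_of_mem _ (ih rfl (by tauto))
    · rcases h with rfl | rfl
      · exact (no_walk_b2 W rfl (by tauto)).elim
      · exact List.mem_cons_of_mem _ (ih rfl (by tauto))
    · subst h; simp [DWalk.arcs]

open VIF in
lemma walk_a2_arc : ∀ {u w : VIF} (W : DWalk AdjIF u w), w = a2 →
    u ≠ i10 → u ≠ a2 → (i7, i10) ∈ W.arcs := by
  intro u w W
  induction W with
  | nil x => rintro rfl _ h; exact (h rfl).elim
  | cons h W ih =>
    rename_i u v _
    rintro rfl hu1 _
    by_cases hv1 : v = i10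
    · subst hv1; simp [AdjIF, arcsIF] at h
      subst h; simp [DWalk.arcs]
    · by_cases hv2 : v = a2
      · subst hv2; simp [AdjIF, arcsIF] at h; exact (hu1 h).elim
      · exact List.mem_cons_of_mem _ (ih rfl hv1 hv2)

open VIF in
lemma walk_b1_arc : ∀ {u w : VIF} (W : DWalk AdjIF u w), w = b1 →
    u ≠ i10 → u ≠ b1 → (i7, i10) ∈ W.arcs := by
  intro u w W
  induction W with
  | nil x => rintro rfl _ h; exact (h rfl).elim
  | cons h W ih =>
    rename_i u v _
    rintro rfl hu1 _
    by_cases hv1 : v = i10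
    · subst hv1; simp [AdjIF, arcsIF] at h
      subst h; simp [DWalk.arcs]
    · by_cases hv2 : v = b1
      · subst hv2; simp [AdjIF, arcsIF] at h; exact (hu1 h).elim
      · exact List.mem_cons_of_mem _ (ih rfl hv1 hv2)
/-- in the digraph `IF`, if `P` is a directed path from `a` to `a_i`,
`Q` is a directed path from `b` to `b_j`, and `P` and `Q` are arc-disjoint, then `i = j`. -/
theorem statement12 (i j : Fin 2)
    (P : DWalk AdjIF VIF.a (aTgt i)) (Q : DWalk AdjIF VIF.b (bTgt j))
    (hP : P.IsTrail) (hQ : Q.IsTrail) (hPQ : ArcDisjoint P Q) : i = j := by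

  fin_cases i <;> fin_cases j
  · rfl
  · exact absurd (walk_b2_arc Q rfl (by tauto)) (hPQ _ (walk_a1_arc P rfl (by tauto)))
  · exact absurd (walk_b1_arc Q rfl (by simp) (by simp)) (hPQ _ (walk_a2_arc P rfl (by simp) (by simp)))
  · rfl

end TwoPairs
end

section
/- In the digraph VV, there do not exist two arc-disjoint directed paths, one from b2 to b and the other from a1 to a. -/
namespace TwoPairs

/-- The vertices of the digraph `VV`. -/
inductive VVV : Type
  | a | b | a1 | a2 | b1 | b2
  | V1 | V2 | V3 | V4 | V5
  deriving DecidableEq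

open VVV

/-- The arcs of the digraph `VV`. -/
def arcsVV : List (VVV × VVV) :=
  [(a1,V1),(a2,V2),(b2,V1),(b1,V3),(V1,V2),(V2,V4),(V2,V3),(V3,V5),
   (V4,V5),(V3,a),(V5,b)]

/-- Adjacency relation of `VV`. -/
def AdjVV (x y : VVV) : Prop := (x, y) ∈ arcsVV

lemma adj_V1 {m : VVV} (h : AdjVV V1 m) : m = V2 := by
  cases m <;> simp_all [AdjVV, arcsVV]

lemma adj_a1 {m : VVV} (h : AdjVV a1 m) : m = V1 := by
  cases m <;> simp_all [AdjVV, arcsVV]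

lemma adj_b2 {m : VVV} (h : AdjVV b2 m) : m = V1 := by
  cases m <;> simp_all [AdjVV, arcsVV]

lemma walk_V1 {v : VVV} (P : DWalk AdjVV VVV.V1 v) (hv : v ≠ VVV.V1) :
    (V1, V2) ∈ P.arcs := by
  cases P with
  | nil => exact absurd rfl hv
  | cons h q =>
    have := adj_V1 h
    subst this
    simp [DWalk.arcs]

lemma walk_a1 (Q : DWalk AdjVV VVV.a1 VVV.a) : (V1, V2) ∈ Q.arcs := by
  cases Q with
  | cons h q =>
    have := adj_a1 h
    subst this
    exact List.mem_cons_of_mem _ (walk_V1 q (by simp))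

lemma walk_b2 (P : DWalk AdjVV VVV.b2 VVV.b) : (V1, V2) ∈ P.arcs := by
  cases P with
  | cons h q =>
    have := adj_b2 h
    subst this
    exact List.mem_cons_of_mem _ (walk_V1 q (by simp))

/-- in the digraph `VV`, there do not exist two arc-disjoint directed
paths, one from `b2` to `b` and the other from `a1` to `a`. -/
theorem statement15 :
    ¬ ∃ (P : DWalk AdjVV VVV.b2 VVV.b) (Q : DWalk AdjVV VVV.a1 VVV.a),
      P.IsTrail ∧ Q.IsTrail ∧ ArcDisjoint P Q := by
  rintro ⟨P, Q, _, _, hd⟩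
  exact hd _ (walk_b2 P) (walk_a1 Q)

end TwoPairs
end

section
/- In the digraph YES, there do not exist two arc-disjoint directed paths, one from c to b' and the other from a to a'. -/
namespace TwoPairs

/-- The vertices of the digraph `YES`. -/
inductive VYES : Type
  | a | b | c | a' | b' | c'
  | p1 | p2 | p3 | p4 | p5 | p6
  deriving DecidableEq

/-- The arcs of the digraph `YES`. -/
def arcsYES : List (VYES × VYES) :=
  [(.a,.p1),(.b,.p1),(.c,.p3),(.p1,.p2),(.p3,.p2),(.p2,.p5),(.p1,.p4),
   (.p3,.p6),(.p5,.p4),(.p5,.p6),(.p4,.b'),(.p6,.c'),(.p6,.a')]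

/-- Adjacency relation of `YES`. -/
def AdjYES (x y : VYES) : Prop := (x, y) ∈ arcsYES

/-- The vertices of the digraph `NO`. -/
inductive VNO : Type
  | a | b | c | a' | b' | c'
  | m1 | m2
  deriving DecidableEq

/-- The arcs of the digraph `NO`. -/
def arcsNO : List (VNO × VNO) :=
  [(.a,.m1),(.b,.m1),(.m1,.m2),(.m1,.b'),(.c,.m2),(.m2,.c'),(.m2,.a')]

/-- Adjacency relation of `NO`. -/
def AdjNO (x y : VNO) : Prop := (x, y) ∈ arcsNO

end TwoPairs

/-! The arc `p2 → p5` separates both pairs: it is the only arc leaving `{c, p3, p2, p6, c', a'}`,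
which contains `c` but not `b'`, and the only arc leaving `{a, p1, p2, p4, b'}`, which contains `a`
but not `a'`. So every walk from `c` to `b'` and every walk from `a` to `a'` uses it. -/

namespace TwoPairs

variable {V : Type*} {A : V → V → Prop}

theorem DWalk.mem_arcs_of_forall_leaving_eq {S : Set V} {e : V × V}
    (hS : ∀ x y, A x y → x ∈ S → y ∉ S → (x, y) = e) {u v : V} (W : DWalk A u v)
    (hu : u ∈ S) (hv : v ∉ S) : e ∈ W.arcs := by
  induction W with
  | nil w => exact absurd hu hv
  | @cons x y z hxy W ih =>
    by_cases hy : y ∈ S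
    · exact List.mem_cons_of_mem _ (ih hy hv)
    · exact hS x y hxy hu hy ▸ List.mem_cons_self

theorem p2_p5_mem_arcs_of_walk_c_b' (W : DWalk AdjYES .c .b') : (.p2, .p5) ∈ W.arcs := by
  have hS : ∀ e ∈ arcsYES, e.1 ∈ ({.c, .p3, .p2, .p6, .c', .a'} : Finset VYES) →
      e.2 ∉ ({.c, .p3, .p2, .p6, .c', .a'} : Finset VYES) → e = (.p2, .p5) := by
    decide
  exact W.mem_arcs_of_forall_leaving_eq (fun x y h => hS (x, y) h) (by decide) (by decide)

theorem p2_p5_mem_arcs_of_walk_a_a' (W : DWalk AdjYES .a .a') : (.p2, .p5) ∈ W.arcs := by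
  have hS : ∀ e ∈ arcsYES, e.1 ∈ ({.a, .p1, .p2, .p4, .b'} : Finset VYES) →
      e.2 ∉ ({.a, .p1, .p2, .p4, .b'} : Finset VYES) → e = (.p2, .p5) := by
    decide
  exact W.mem_arcs_of_forall_leaving_eq (fun x y h => hS (x, y) h) (by decide) (by decide)

/-- in the digraph `YES`, there do not exist two arc-disjoint directed
paths, one from `c` to `b'` and the other from `a` to `a'`. -/
theorem statement16 :
    ¬ ∃ (P : DWalk AdjYES VYES.c VYES.b') (Q : DWalk AdjYES VYES.a VYES.a'),
      P.IsTrail ∧ Q.IsTrail ∧ ArcDisjoint P Q := by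
  rintro ⟨P, Q, -, -, hPQ⟩
  exact hPQ _ (p2_p5_mem_arcs_of_walk_c_b' P) (p2_p5_mem_arcs_of_walk_a_a' Q)

end TwoPairs
end
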